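/- arXiv:2311.03744 — 3 statements merged into one kernel-verified Lean document; each statement's English description precedes it below -/
import Mathlib

section
/- Let g = e^{2f₁}g₁ + e^{2f₂}g₂ be a conformal product metric on M = M₁ × M₂ and let ∇ be the Weyl connection of [g] whose Lee form with respect to g is θ^g = −d₁f₂ − d₂f₁. Then ∇_{X₁}X₂ = 0 for all vector fields X₁ lifted from M₁ and X₂ lifted from M₂; in particular ∇ preserves the distributions TM₁ and TM₂. -/
open Real
open scoped ContDiff

noncomputable section

/-- A Riemannian metric on the "vector space manifold" `E`, encoded as a smooth family of
symmetric positive definite bilinear forms, given as a raw function `g : E → E → E → ℝ`. -/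
structure IsRiemannianMetric {E : Type*} [NormedAddCommGroup E] [NormedSpace ℝ E]
    (g : E → E → E → ℝ) : Prop where
  smooth : ∀ u v : E, ContDiff ℝ ∞ (fun x => g x u v)
  symm : ∀ x u v, g x u v = g x v u
  add_left : ∀ x u u' v, g x (u + u') v = g x u v + g x u' v
  smul_left : ∀ x (c : ℝ) (u v : E), g x (c • u) v = c * g x u v
  posdef : ∀ x (v : E), v ≠ 0 → 0 < g x v v

/-- `D` is the Levi-Civita covariant derivative of the metric `g`: it is metric
(`∇ g = 0`, expressed through the Leibniz rule for `g`) and torsion-free. -/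
structure IsLeviCivita {E : Type*} [NormedAddCommGroup E] [NormedSpace ℝ E]
    (g : E → E → E → ℝ) (D : (E → E) → (E → E) → (E → E)) : Prop where
  compat : ∀ X Y Z : E → E, ContDiff ℝ ∞ X → ContDiff ℝ ∞ Y → ContDiff ℝ ∞ Z → ∀ x,
    fderiv ℝ (fun y => g y (Y y) (Z y)) x (X x) =
      g x (D X Y x) (Z x) + g x (Y x) (D X Z x)
  torsion_free : ∀ X Y : E → E, ContDiff ℝ ∞ X → ContDiff ℝ ∞ Y → ∀ x,
    D X Y x - D Y X x = fderiv ℝ Y x (X x) - fderiv ℝ X x (Y x)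

/-- `D` is a Weyl connection for the (conformal class of the) metric `g`, with Lee form `θ`
with respect to `g`: it is torsion-free and satisfies `∇ g = -2 θ ⊗ g`. -/
structure IsWeylConnection {E : Type*} [NormedAddCommGroup E] [NormedSpace ℝ E]
    (g : E → E → E → ℝ) (θ : E → E → ℝ) (D : (E → E) → (E → E) → (E → E)) : Prop where
  compat : ∀ X Y Z : E → E, ContDiff ℝ ∞ X → ContDiff ℝ ∞ Y → ContDiff ℝ ∞ Z → ∀ x,
    fderiv ℝ (fun y => g y (Y y) (Z y)) x (X x) =
      -2 * θ x (X x) * g x (Y x) (Z x) + g x (D X Y x) (Z x) + g x (Y x) (D X Z x)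
  torsion_free : ∀ X Y : E → E, ContDiff ℝ ∞ X → ContDiff ℝ ∞ Y → ∀ x,
    D X Y x - D Y X x = fderiv ℝ Y x (X x) - fderiv ℝ X x (Y x)

variable {E₁ E₂ : Type*} [NormedAddCommGroup E₁] [NormedSpace ℝ E₁]
  [NormedAddCommGroup E₂] [NormedSpace ℝ E₂]

/-- The vector field on `M₁ × M₂` obtained by lifting a vector field on the factor `M₁`. -/
def liftVF₁ (X : E₁ → E₁) : E₁ × E₂ → E₁ × E₂ := fun x => (X x.1, 0)

/-- The vector field on `M₁ × M₂` obtained by lifting a vector field on the factor `M₂`. -/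
def liftVF₂ (X : E₂ → E₂) : E₁ × E₂ → E₁ × E₂ := fun x => (0, X x.2)

/-- The conformal product metric `e^{2 f₁} g₁ + e^{2 f₂} g₂` on `M₁ × M₂`. -/
def conformalProductMetric (f₁ f₂ : E₁ × E₂ → ℝ) (g₁ : E₁ → E₁ → E₁ → ℝ)
    (g₂ : E₂ → E₂ → E₂ → ℝ) : (E₁ × E₂) → (E₁ × E₂) → (E₁ × E₂) → ℝ :=
  fun x u v => exp (2 * f₁ x) * g₁ x.1 u.1 v.1 + exp (2 * f₂ x) * g₂ x.2 u.2 v.2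

end


/-!
The connection `∇ = ∇^g + θ(X)Y + θ(Y)X − g(X,Y)θ♯` is torsion free with `∇g = −2θ ⊗ g`, and
`TM₁ ⊕ TM₂` is a `g`-orthogonal splitting. The choice `θ = −d₁f₂ − d₂f₁` is exactly what makes
`e^{2f₂}g₂` parallel for `∇` along `TM₁`, and `e^{2f₁}g₁` along `TM₂`: differentiating along the
other factor only sees the conformal factor. The Koszul-type identities of `∇` then give, in turn,
`∇_u v = 0` for constant `u ∈ TM₁`, `v ∈ TM₂`; `∇_X u ∈ TM₁` for every field `X`; and, by
metricity, `∇_X Y ∈ TM₁` for every field `Y` tangent to `TM₁` (and symmetrically for `TM₂`).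
Lifted fields commute, so `∇_{X₁}X₂ = ∇_{X₂}X₁` lies in `TM₁ ∩ TM₂ = 0`.

The metrics are only smooth for fixed arguments, so `g(X, Y)` is never differentiated directly
when `X` or `Y` is not constant: such derivatives are reached only through the compatibility
identity of `∇`, which is why the Koszul steps are arranged around constant fields.
-/

section

variable {E : Type*} [NormedAddCommGroup E] [NormedSpace ℝ E]

namespace IsRiemannianMetric

variable {g : E → E → E → ℝ}

theorem zero_left (hg : IsRiemannianMetric g) (x v : E) : g x 0 v = 0 := by
  simpa using hg.smul_left x 0 0 v

theorem zero_right (hg : IsRiemannianMetric g) (x u : E) : g x u 0 = 0 := by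
  rw [hg.symm, hg.zero_left]

theorem add_right (hg : IsRiemannianMetric g) (x u v v' : E) :
    g x u (v + v') = g x u v + g x u v' := by
  rw [hg.symm, hg.add_left, hg.symm x v, hg.symm x v']

theorem sub_left (hg : IsRiemannianMetric g) (x u u' v : E) :
    g x (u - u') v = g x u v - g x u' v := by
  rw [eq_sub_iff_add_eq, ← hg.add_left, sub_add_cancel]

theorem sub_right (hg : IsRiemannianMetric g) (x u v v' : E) :
    g x u (v - v') = g x u v - g x u v' := by
  rw [hg.symm, hg.sub_left, hg.symm x v, hg.symm x v']

theorem smul_right (hg : IsRiemannianMetric g) (x : E) (c : ℝ) (u v : E) :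
    g x u (c • v) = c * g x u v := by
  rw [hg.symm, hg.smul_left, hg.symm]

theorem nonneg (hg : IsRiemannianMetric g) (x v : E) : 0 ≤ g x v v := by
  rcases eq_or_ne v 0 with rfl | hv
  · rw [hg.zero_left]
  · exact (hg.posdef x v hv).le

theorem eq_zero_of_forall (hg : IsRiemannianMetric g) {x v : E} (hv : ∀ w, g x v w = 0) :
    v = 0 := by
  by_contra hne
  exact (hg.posdef x v hne).ne' (hv v)

end IsRiemannianMetric

theorem IsLeviCivita.isWeylConnection {g : E → E → E → ℝ} {Dg : (E → E) → (E → E) → (E → E)}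
    {θ : E → E → ℝ} {θs : E → E} (hg : IsRiemannianMetric g) (hDg : IsLeviCivita g Dg)
    (hθs : ∀ x v, g x (θs x) v = θ x v) :
    IsWeylConnection g θ fun X Y x =>
      Dg X Y x + θ x (X x) • Y x + θ x (Y x) • X x - g x (X x) (Y x) • θs x where
  compat X Y Z hX hY hZ x := by
    simp only [hg.add_left, hg.sub_left, hg.smul_left, hg.add_right, hg.sub_right,
      hg.smul_right, hθs]
    rw [hDg.compat X Y Z hX hY hZ x, hg.symm x (Y x) (θs x), hθs,
      hg.symm x (Y x) (X x)]
    ring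
  torsion_free X Y hX hY x := by
    rw [← hDg.torsion_free X Y hX hY x, hg.symm x (Y x) (X x)]
    abel

structure IsOrthogonalSplitting (g : E → E → E → ℝ) (π₁ π₂ : E →L[ℝ] E) : Prop where
  add_apply : ∀ a, π₁ a + π₂ a = a
  orthogonal : ∀ y a b, g y (π₁ a) (π₂ b) = 0

/-- Along `range π₁`, the restriction of `g` to `range π₂` is parallel for the Weyl structure
with Lee form `θ`. -/
def IsConformalAlong (g : E → E → E → ℝ) (θ : E → E → ℝ) (π₁ π₂ : E →L[ℝ] E) : Prop :=
  ∀ x a b d, fderiv ℝ (fun y => g y (π₂ a) (π₂ b)) x (π₁ d) = -2 * θ x (π₁ d) * g x (π₂ a) (π₂ b)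

namespace IsOrthogonalSplitting

variable {g : E → E → E → ℝ} {π₁ π₂ : E →L[ℝ] E}

theorem symm (hg : IsRiemannianMetric g) (hπ : IsOrthogonalSplitting g π₁ π₂) :
    IsOrthogonalSplitting g π₂ π₁ where
  add_apply a := by rw [add_comm, hπ.add_apply]
  orthogonal y a b := by rw [hg.symm, hπ.orthogonal]

theorem apply_proj_right (hg : IsRiemannianMetric g) (hπ : IsOrthogonalSplitting g π₁ π₂)
    (y w b : E) : g y w (π₂ b) = g y (π₂ w) (π₂ b) := by
  conv_lhs => rw [← hπ.add_apply w]
  rw [hg.add_left, hπ.orthogonal, zero_add]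

theorem apply_eq_zero_of_proj_eq_zero (hg : IsRiemannianMetric g)
    (hπ : IsOrthogonalSplitting g π₁ π₂) {y w : E} (hw : π₂ w = 0) (b : E) :
    g y w (π₂ b) = 0 := by
  rw [hπ.apply_proj_right hg, hw, hg.zero_left]

theorem proj_eq_zero_of_forall (hg : IsRiemannianMetric g) (hπ : IsOrthogonalSplitting g π₁ π₂)
    {x w : E} (hw : ∀ b, g x w (π₂ b) = 0) : π₂ w = 0 :=
  hg.eq_zero_of_forall fun c => by
    rw [← hπ.add_apply c, hg.add_right, (hπ.symm hg).orthogonal, ← hπ.apply_proj_right hg, hw,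
      zero_add]

end IsOrthogonalSplitting

namespace IsWeylConnection

variable {g : E → E → E → ℝ} {θ : E → E → ℝ} {D : (E → E) → (E → E) → (E → E)}

theorem apply_const_comm (hD : IsWeylConnection g θ D) (x p q : E) :
    D (fun _ => p) (fun _ => q) x = D (fun _ => q) (fun _ => p) x := by
  simpa [sub_eq_zero] using hD.torsion_free _ _ contDiff_const contDiff_const x

theorem apply_const_right (hD : IsWeylConnection g θ D) {X : E → E} (hX : ContDiff ℝ ∞ X)
    (x w : E) : D X (fun _ => w) x = D (fun _ => w) X x - fderiv ℝ X x w := by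
  have h := hD.torsion_free X (fun _ => w) hX contDiff_const x
  rw [fderiv_const_apply, zero_apply, zero_sub, sub_eq_iff_eq_add] at h
  rw [h]
  abel

theorem compat_of_orthogonal (hD : IsWeylConnection g θ D) {X Y Z : E → E}
    (hX : ContDiff ℝ ∞ X) (hY : ContDiff ℝ ∞ Y) (hZ : ContDiff ℝ ∞ Z)
    (h : ∀ y, g y (Y y) (Z y) = 0) (x : E) :
    g x (D X Y x) (Z x) + g x (Y x) (D X Z x) = 0 := by
  have hc := hD.compat X Y Z hX hY hZ x
  rw [show (fun y => g y (Y y) (Z y)) = fun _ => 0 from funext h, fderiv_const_apply, h] at hc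
  simpa using hc.symm

variable {π₁ π₂ : E →L[ℝ] E}

theorem metric_apply_const_const_proj_eq_zero (hg : IsRiemannianMetric g)
    (hπ : IsOrthogonalSplitting g π₁ π₂) (hθ : IsConformalAlong g θ π₁ π₂)
    (hD : IsWeylConnection g θ D) (x a b c : E) :
    g x (D (fun _ => π₁ a) (fun _ => π₂ b) x) (π₂ c) = 0 := by
  -- With `u = π₁ a`, the form `(v, w) ↦ g(∇_u v, w)` on `range π₂` is antisymmetric by `hθ`,
  -- and symmetric because `range π₁ ⟂ range π₂` at every point.
  have hπ' := hπ.symm hg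
  have hbc := hD.compat (fun _ => π₁ a) (fun _ => π₂ b) (fun _ => π₂ c)
    contDiff_const contDiff_const contDiff_const x
  rw [hθ] at hbc
  have hca := hD.compat_of_orthogonal (X := fun _ => π₂ b) contDiff_const contDiff_const
    contDiff_const (fun y => hπ'.orthogonal y c a) x
  have hba := hD.compat_of_orthogonal (X := fun _ => π₂ c) contDiff_const contDiff_const
    contDiff_const (fun y => hπ'.orthogonal y b a) x
  simp only [hD.apply_const_comm x (π₂ b) (π₂ c), hD.apply_const_comm x (π₂ b) (π₁ a),
    hD.apply_const_comm x (π₂ c) (π₁ a)] at hca hba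
  rw [hg.symm x (π₂ c)] at hca
  rw [hg.symm x (π₂ b)] at hbc
  linarith

theorem apply_const_const_eq_zero (hg : IsRiemannianMetric g)
    (hπ : IsOrthogonalSplitting g π₁ π₂) (hθ₁ : IsConformalAlong g θ π₁ π₂)
    (hθ₂ : IsConformalAlong g θ π₂ π₁) (hD : IsWeylConnection g θ D) (x a b : E) :
    D (fun _ => π₁ a) (fun _ => π₂ b) x = 0 := by
  have h₁ : ∀ c, g x (D (fun _ => π₁ a) (fun _ => π₂ b) x) (π₁ c) = 0 := by
    intro c
    rw [hD.apply_const_comm]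
    exact hD.metric_apply_const_const_proj_eq_zero hg (hπ.symm hg) hθ₂ x b a c
  have h₂ : ∀ c, g x (D (fun _ => π₁ a) (fun _ => π₂ b) x) (π₂ c) = 0 :=
    hD.metric_apply_const_const_proj_eq_zero hg hπ hθ₁ x a b
  exact hg.eq_zero_of_forall fun c => by rw [← hπ.add_apply c, hg.add_right, h₁, h₂, add_zero]

theorem metric_apply_const_proj (hg : IsRiemannianMetric g) (hπ : IsOrthogonalSplitting g π₁ π₂)
    (hθ₁ : IsConformalAlong g θ π₁ π₂) (hθ₂ : IsConformalAlong g θ π₂ π₁)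
    (hD : IsWeylConnection g θ D) {X : E → E} (hX : ContDiff ℝ ∞ X) (x a b : E) :
    g x (D (fun _ => π₁ a) (fun y => π₂ (X y)) x) (π₂ b) = g x (fderiv ℝ X x (π₁ a)) (π₂ b) := by
  set Y : E → E := fun y => π₂ (X y)
  have hY : ContDiff ℝ ∞ Y := π₂.contDiff.comp hX
  have hdY : ∀ w, fderiv ℝ Y x w = π₂ (fderiv ℝ X x w) := fun w =>
    DFunLike.congr_fun (π₂.hasFDerivAt.comp x (hX.differentiable (by simp) x).hasFDerivAt).fderiv w
  have hvu : g x (D (fun _ => π₂ b) Y x) (π₁ a) = 0 := by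
    have h := hD.compat_of_orthogonal (X := fun _ => π₂ b) contDiff_const hY contDiff_const
      (fun y => (hπ.symm hg).orthogonal y (X y) a) x
    rwa [hD.apply_const_comm, hD.apply_const_const_eq_zero hg hπ hθ₁ hθ₂, hg.zero_right,
      add_zero] at h
  have hYu : g x (D Y (fun _ => π₁ a) x) (π₂ b) = 0 := by
    have h := hD.compat_of_orthogonal hY contDiff_const contDiff_const
      (fun y => hπ.orthogonal y a b) x
    rwa [hD.apply_const_right hY x (π₂ b), hdY, hg.sub_right, hπ.orthogonal, sub_zero,
      hg.symm x (π₁ a), hvu, add_zero] at h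
  rwa [hD.apply_const_right hY x (π₁ a), hdY, hg.sub_left, ← hπ.apply_proj_right hg,
    sub_eq_zero] at hYu

theorem metric_apply_const (hg : IsRiemannianMetric g) (hπ : IsOrthogonalSplitting g π₁ π₂)
    (hθ₁ : IsConformalAlong g θ π₁ π₂) (hθ₂ : IsConformalAlong g θ π₂ π₁)
    (hD : IsWeylConnection g θ D) {X : E → E} (hX : ContDiff ℝ ∞ X) (x a b : E) :
    g x (D (fun _ => π₁ a) X x) (π₂ b) = g x (fderiv ℝ X x (π₁ a)) (π₂ b) := by
  have hY : ContDiff ℝ ∞ fun y => π₂ (X y) := π₂.contDiff.comp hX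
  have hcX := hD.compat (fun _ => π₁ a) X (fun _ => π₂ b) contDiff_const hX contDiff_const x
  -- `g(X, π₂ b)` and `g(π₂ X, π₂ b)` are the same function: both identities differentiate it.
  have hcY := hD.compat (fun _ => π₁ a) _ (fun _ => π₂ b) contDiff_const hY contDiff_const x
  simp only [hD.apply_const_const_eq_zero hg hπ hθ₁ hθ₂, hg.zero_right, add_zero,
    ← hπ.apply_proj_right hg] at hcX hcY
  rw [← metric_apply_const_proj hg hπ hθ₁ hθ₂ hD hX]
  linarith

theorem proj_apply_const_eq_zero (hg : IsRiemannianMetric g)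
    (hπ : IsOrthogonalSplitting g π₁ π₂) (hθ₁ : IsConformalAlong g θ π₁ π₂)
    (hθ₂ : IsConformalAlong g θ π₂ π₁) (hD : IsWeylConnection g θ D) {X : E → E}
    (hX : ContDiff ℝ ∞ X) (x a : E) : π₂ (D X (fun _ => π₁ a) x) = 0 :=
  hπ.proj_eq_zero_of_forall hg (x := x) fun b => by
    rw [hD.apply_const_right hX, hg.sub_left, metric_apply_const hg hπ hθ₁ hθ₂ hD hX, sub_self]

theorem proj_apply_eq_zero (hg : IsRiemannianMetric g)
    (hπ : IsOrthogonalSplitting g π₁ π₂) (hθ₁ : IsConformalAlong g θ π₁ π₂)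
    (hθ₂ : IsConformalAlong g θ π₂ π₁) (hD : IsWeylConnection g θ D) {X Y : E → E}
    (hX : ContDiff ℝ ∞ X) (hY : ContDiff ℝ ∞ Y) (hY₂ : ∀ y, π₂ (Y y) = 0) (x : E) :
    π₂ (D X Y x) = 0 := by
  refine hπ.proj_eq_zero_of_forall hg (x := x) fun b => ?_
  have hDb : D X (fun _ => π₂ b) x = π₂ (D X (fun _ => π₂ b) x) := by
    conv_lhs => rw [← hπ.add_apply (D X _ x),
      proj_apply_const_eq_zero hg (hπ.symm hg) hθ₂ hθ₁ hD hX x b, zero_add]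
  have hc := hD.compat_of_orthogonal hX hY contDiff_const
    (fun y => hπ.apply_eq_zero_of_proj_eq_zero hg (hY₂ y) b) x
  rwa [hDb, hπ.apply_eq_zero_of_proj_eq_zero hg (hY₂ x), add_zero] at hc

end IsWeylConnection

theorem fderiv_exp_two_mul_mul_comp_apply {F G : Type*} [NormedAddCommGroup F] [NormedSpace ℝ F]
    [NormedAddCommGroup G] [NormedSpace ℝ G] {φ : F → ℝ} {h : G → ℝ} {p : F →L[ℝ] G} {x d : F}
    (hφ : DifferentiableAt ℝ φ x) (hh : DifferentiableAt ℝ h (p x)) (hd : p d = 0) :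
    fderiv ℝ (fun y => exp (2 * φ y) * h (p y)) x d =
      2 * fderiv ℝ φ x d * (exp (2 * φ x) * h (p x)) := by
  have H : HasFDerivAt (fun y => exp (2 * φ y) * h (p y)) _ x :=
    ((hφ.hasFDerivAt.const_mul 2).exp).mul (hh.hasFDerivAt.comp x p.hasFDerivAt)
  rw [H.fderiv]
  simp [hd]
  ring

end

section ConformalProduct

variable {E₁ E₂ : Type*} [NormedAddCommGroup E₁] [NormedSpace ℝ E₁]
  [NormedAddCommGroup E₂] [NormedSpace ℝ E₂]
  {g₁ : E₁ → E₁ → E₁ → ℝ} {g₂ : E₂ → E₂ → E₂ → ℝ} {f₁ f₂ : E₁ × E₂ → ℝ}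

theorem isRiemannianMetric_conformalProductMetric (hg₁ : IsRiemannianMetric g₁)
    (hg₂ : IsRiemannianMetric g₂) (hf₁ : ContDiff ℝ ∞ f₁) (hf₂ : ContDiff ℝ ∞ f₂) :
    IsRiemannianMetric (conformalProductMetric f₁ f₂ g₁ g₂) where
  smooth u v := by
    have h₁ : ContDiff ℝ ∞ fun y : E₁ × E₂ => g₁ y.1 u.1 v.1 :=
      (hg₁.smooth u.1 v.1).comp contDiff_fst
    have h₂ : ContDiff ℝ ∞ fun y : E₁ × E₂ => g₂ y.2 u.2 v.2 :=
      (hg₂.smooth u.2 v.2).comp contDiff_snd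
    exact ((contDiff_const.mul hf₁).exp.mul h₁).add ((contDiff_const.mul hf₂).exp.mul h₂)
  symm x u v := by simp only [conformalProductMetric, hg₁.symm x.1 u.1, hg₂.symm x.2 u.2]
  add_left x u u' v := by
    simp only [conformalProductMetric, Prod.fst_add, Prod.snd_add, hg₁.add_left, hg₂.add_left]
    ring
  smul_left x c u v := by
    simp only [conformalProductMetric, Prod.smul_fst, Prod.smul_snd, hg₁.smul_left, hg₂.smul_left]
    ring
  posdef x v hv := by
    have h₁ := mul_nonneg (exp_pos (2 * f₁ x)).le (hg₁.nonneg x.1 v.1)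
    have h₂ := mul_nonneg (exp_pos (2 * f₂ x)).le (hg₂.nonneg x.2 v.2)
    have hv' : v.1 ≠ 0 ∨ v.2 ≠ 0 := by
      contrapose! hv
      exact Prod.ext hv.1 hv.2
    unfold conformalProductMetric
    rcases hv' with hv | hv
    · exact add_pos_of_pos_of_nonneg (mul_pos (exp_pos _) (hg₁.posdef x.1 v.1 hv)) h₂
    · exact add_pos_of_nonneg_of_pos h₁ (mul_pos (exp_pos _) (hg₂.posdef x.2 v.2 hv))

theorem isOrthogonalSplitting_conformalProductMetric (hg₁ : IsRiemannianMetric g₁)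
    (hg₂ : IsRiemannianMetric g₂) :
    IsOrthogonalSplitting (conformalProductMetric f₁ f₂ g₁ g₂)
      ((ContinuousLinearMap.inl ℝ E₁ E₂).comp (ContinuousLinearMap.fst ℝ E₁ E₂))
      ((ContinuousLinearMap.inr ℝ E₁ E₂).comp (ContinuousLinearMap.snd ℝ E₁ E₂)) where
  add_apply a := by simp
  orthogonal y a b := by simp [conformalProductMetric, hg₁.zero_right, hg₂.zero_left]

variable {θ : E₁ × E₂ → E₁ × E₂ → ℝ}

theorem isConformalAlong_fst_conformalProductMetric (hg₁ : IsRiemannianMetric g₁)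
    (hg₂ : IsRiemannianMetric g₂) (hf₂ : ContDiff ℝ ∞ f₂)
    (hθ : ∀ x v, θ x v = -(fderiv ℝ f₂ x (v.1, 0)) - fderiv ℝ f₁ x (0, v.2)) :
    IsConformalAlong (conformalProductMetric f₁ f₂ g₁ g₂) θ
      ((ContinuousLinearMap.inl ℝ E₁ E₂).comp (ContinuousLinearMap.fst ℝ E₁ E₂))
      ((ContinuousLinearMap.inr ℝ E₁ E₂).comp (ContinuousLinearMap.snd ℝ E₁ E₂)) := by
  intro x a b d
  have hG : (fun y => conformalProductMetric f₁ f₂ g₁ g₂ y (0, a.2) (0, b.2))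
      = fun y => exp (2 * f₂ y) * g₂ y.2 a.2 b.2 := by
    funext y
    simp [conformalProductMetric, hg₁.zero_left]
  have hd := fderiv_exp_two_mul_mul_comp_apply (h := fun z => g₂ z a.2 b.2)
    (p := ContinuousLinearMap.snd ℝ E₁ E₂) (d := (d.1, 0)) (hf₂.differentiable (by simp) x)
    ((hg₂.smooth a.2 b.2).differentiable (by simp) _) rfl
  simp only [ContinuousLinearMap.coe_comp, Function.comp_apply, ContinuousLinearMap.inl_apply,
    ContinuousLinearMap.inr_apply, ContinuousLinearMap.coe_fst',
    ContinuousLinearMap.coe_snd'] at hd ⊢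
  rw [hG, hd, hθ]
  simp [conformalProductMetric, hg₁.zero_left, Prod.mk_zero_zero]

theorem isConformalAlong_snd_conformalProductMetric (hg₁ : IsRiemannianMetric g₁)
    (hg₂ : IsRiemannianMetric g₂) (hf₁ : ContDiff ℝ ∞ f₁)
    (hθ : ∀ x v, θ x v = -(fderiv ℝ f₂ x (v.1, 0)) - fderiv ℝ f₁ x (0, v.2)) :
    IsConformalAlong (conformalProductMetric f₁ f₂ g₁ g₂) θ
      ((ContinuousLinearMap.inr ℝ E₁ E₂).comp (ContinuousLinearMap.snd ℝ E₁ E₂))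
      ((ContinuousLinearMap.inl ℝ E₁ E₂).comp (ContinuousLinearMap.fst ℝ E₁ E₂)) := by
  intro x a b d
  have hG : (fun y => conformalProductMetric f₁ f₂ g₁ g₂ y (a.1, 0) (b.1, 0))
      = fun y => exp (2 * f₁ y) * g₁ y.1 a.1 b.1 := by
    funext y
    simp [conformalProductMetric, hg₂.zero_left]
  have hd := fderiv_exp_two_mul_mul_comp_apply (h := fun z => g₁ z a.1 b.1)
    (p := ContinuousLinearMap.fst ℝ E₁ E₂) (d := (0, d.2)) (hf₁.differentiable (by simp) x)
    ((hg₁.smooth a.1 b.1).differentiable (by simp) _) rfl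
  simp only [ContinuousLinearMap.coe_comp, Function.comp_apply, ContinuousLinearMap.inl_apply,
    ContinuousLinearMap.inr_apply, ContinuousLinearMap.coe_fst',
    ContinuousLinearMap.coe_snd'] at hd ⊢
  rw [hG, hd, hθ]
  simp [conformalProductMetric, hg₂.zero_left, Prod.mk_zero_zero]

end ConformalProduct

section Lifts

variable {E₁ E₂ : Type*} [NormedAddCommGroup E₁] [NormedSpace ℝ E₁]
  [NormedAddCommGroup E₂] [NormedSpace ℝ E₂]

theorem contDiff_liftVF₁ {X : E₁ → E₁} (hX : ContDiff ℝ ∞ X) :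
    ContDiff ℝ ∞ (liftVF₁ (E₂ := E₂) X) :=
  (hX.comp contDiff_fst).prodMk contDiff_const

theorem contDiff_liftVF₂ {X : E₂ → E₂} (hX : ContDiff ℝ ∞ X) :
    ContDiff ℝ ∞ (liftVF₂ (E₁ := E₁) X) :=
  contDiff_const.prodMk (hX.comp contDiff_snd)

theorem fderiv_liftVF₁_apply_inr {X : E₁ → E₁} (hX : ContDiff ℝ ∞ X) (x : E₁ × E₂) (v : E₂) :
    fderiv ℝ (liftVF₁ X) x (0, v) = 0 := by
  have H : HasFDerivAt (liftVF₁ (E₂ := E₂) X)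
      ((ContinuousLinearMap.inl ℝ E₁ E₂).comp
        ((fderiv ℝ X x.1).comp (ContinuousLinearMap.fst ℝ E₁ E₂))) x :=
    (ContinuousLinearMap.inl ℝ E₁ E₂).hasFDerivAt.comp x
      ((hX.differentiable (by simp) x.1).hasFDerivAt.comp x hasFDerivAt_fst)
  simp [H.fderiv]

theorem fderiv_liftVF₂_apply_inl {X : E₂ → E₂} (hX : ContDiff ℝ ∞ X) (x : E₁ × E₂) (v : E₁) :
    fderiv ℝ (liftVF₂ X) x (v, 0) = 0 := by
  have H : HasFDerivAt (liftVF₂ (E₁ := E₁) X)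
      ((ContinuousLinearMap.inr ℝ E₁ E₂).comp
        ((fderiv ℝ X x.2).comp (ContinuousLinearMap.snd ℝ E₁ E₂))) x :=
    (ContinuousLinearMap.inr ℝ E₁ E₂).hasFDerivAt.comp x
      ((hX.differentiable (by simp) x.2).hasFDerivAt.comp x hasFDerivAt_snd)
  simp [H.fderiv]

theorem IsWeylConnection.apply_liftVF₁_liftVF₂_comm {g : E₁ × E₂ → E₁ × E₂ → E₁ × E₂ → ℝ}
    {θ : E₁ × E₂ → E₁ × E₂ → ℝ}
    {D : (E₁ × E₂ → E₁ × E₂) → (E₁ × E₂ → E₁ × E₂) → (E₁ × E₂ → E₁ × E₂)}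
    (hD : IsWeylConnection g θ D) {X₁ : E₁ → E₁} {X₂ : E₂ → E₂} (hX₁ : ContDiff ℝ ∞ X₁)
    (hX₂ : ContDiff ℝ ∞ X₂) (x : E₁ × E₂) :
    D (liftVF₁ X₁) (liftVF₂ X₂) x = D (liftVF₂ X₂) (liftVF₁ X₁) x := by
  have h := hD.torsion_free _ _ (contDiff_liftVF₁ hX₁) (contDiff_liftVF₂ hX₂) x
  rwa [liftVF₁, liftVF₂, fderiv_liftVF₁_apply_inr hX₁, fderiv_liftVF₂_apply_inl hX₂, sub_self,
    sub_eq_zero] at h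

end Lifts

/-- Let `g = e^{2f₁}g₁ + e^{2f₂}g₂` be a conformal product metric on `M₁ × M₂`
and `∇` the Weyl connection of `[g]` with Lee form `θ^g = −d₁f₂ − d₂f₁` with respect to `g`,
obtained from the Levi-Civita connection `∇^g` by
`∇_X Y = ∇^g_X Y + θ(X)Y + θ(Y)X − g(X,Y)θ♯`.  Then `∇_{X₁}X₂ = 0` for all vector fields `X₁`
lifted from `M₁` and `X₂` lifted from `M₂`; in particular `∇` preserves the distributions
`TM₁` and `TM₂`. -/
theorem adapted_weyl_connection_mixed_derivative_zero
    {E₁ E₂ : Type*} [NormedAddCommGroup E₁] [NormedSpace ℝ E₁]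
    [NormedAddCommGroup E₂] [NormedSpace ℝ E₂]
    (g₁ : E₁ → E₁ → E₁ → ℝ) (g₂ : E₂ → E₂ → E₂ → ℝ)
    (hg₁ : IsRiemannianMetric g₁) (hg₂ : IsRiemannianMetric g₂)
    (f₁ f₂ : E₁ × E₂ → ℝ) (hf₁ : ContDiff ℝ ∞ f₁) (hf₂ : ContDiff ℝ ∞ f₂)
    (Dg : (E₁ × E₂ → E₁ × E₂) → (E₁ × E₂ → E₁ × E₂) → (E₁ × E₂ → E₁ × E₂))
    (hDg : IsLeviCivita (conformalProductMetric f₁ f₂ g₁ g₂) Dg)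
    -- the Lee form `θ = −d₁f₂ − d₂f₁`
    (θ : E₁ × E₂ → E₁ × E₂ → ℝ)
    (hθ : ∀ x v, θ x v = -(fderiv ℝ f₂ x (v.1, 0)) - fderiv ℝ f₁ x (0, v.2))
    -- the `g`-dual vector field of `θ`
    (θs : E₁ × E₂ → E₁ × E₂)
    (hθs : ∀ x v, conformalProductMetric f₁ f₂ g₁ g₂ x (θs x) v = θ x v)
    -- the adapted Weyl connection
    (D : (E₁ × E₂ → E₁ × E₂) → (E₁ × E₂ → E₁ × E₂) → (E₁ × E₂ → E₁ × E₂))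
    (hD : ∀ X Y x, D X Y x = Dg X Y x + θ x (X x) • Y x + θ x (Y x) • X x
      - conformalProductMetric f₁ f₂ g₁ g₂ x (X x) (Y x) • θs x) :
    (∀ (X₁ : E₁ → E₁) (X₂ : E₂ → E₂), ContDiff ℝ ∞ X₁ → ContDiff ℝ ∞ X₂ → ∀ x,
        D (liftVF₁ X₁) (liftVF₂ X₂) x = 0)
    ∧ (∀ (X : E₁ × E₂ → E₁ × E₂) (X₂ : E₂ → E₂), ContDiff ℝ ∞ X → ContDiff ℝ ∞ X₂ → ∀ x,
        (D X (liftVF₂ X₂) x).1 = 0)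
    ∧ (∀ (X : E₁ × E₂ → E₁ × E₂) (X₁ : E₁ → E₁), ContDiff ℝ ∞ X → ContDiff ℝ ∞ X₁ → ∀ x,
        (D X (liftVF₁ X₁) x).2 = 0) := by
  have hG := isRiemannianMetric_conformalProductMetric hg₁ hg₂ hf₁ hf₂
  have hW : IsWeylConnection (conformalProductMetric f₁ f₂ g₁ g₂) θ D := by
    rw [show D = _ from funext fun X => funext fun Y => funext (hD X Y)]
    exact hDg.isWeylConnection hG hθs
  have hπ := isOrthogonalSplitting_conformalProductMetric (f₁ := f₁) (f₂ := f₂) hg₁ hg₂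
  have hθ₁ := isConformalAlong_fst_conformalProductMetric hg₁ hg₂ hf₂ hθ
  have hθ₂ := isConformalAlong_snd_conformalProductMetric hg₁ hg₂ hf₁ hθ
  have hTM₂ : ∀ (X : E₁ × E₂ → E₁ × E₂) (X₂ : E₂ → E₂), ContDiff ℝ ∞ X → ContDiff ℝ ∞ X₂ →
      ∀ x, (D X (liftVF₂ X₂) x).1 = 0 := fun X X₂ hX hX₂ x => by
    simpa using hW.proj_apply_eq_zero hG (hπ.symm hG) hθ₂ hθ₁ hX (contDiff_liftVF₂ hX₂)
      (fun y => by simp [liftVF₂]) x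
  have hTM₁ : ∀ (X : E₁ × E₂ → E₁ × E₂) (X₁ : E₁ → E₁), ContDiff ℝ ∞ X → ContDiff ℝ ∞ X₁ →
      ∀ x, (D X (liftVF₁ X₁) x).2 = 0 := fun X X₁ hX hX₁ x => by
    simpa using hW.proj_apply_eq_zero hG hπ hθ₁ hθ₂ hX (contDiff_liftVF₁ hX₁)
      (fun y => by simp [liftVF₁]) x
  refine ⟨fun X₁ X₂ hX₁ hX₂ x => Prod.ext (hTM₂ _ _ (contDiff_liftVF₁ hX₁) hX₂ x) ?_, hTM₂, hTM₁⟩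
  rw [hW.apply_liftVF₁_liftVF₂_comm hX₁ hX₂]
  exact hTM₁ _ _ (contDiff_liftVF₂ hX₂) hX₁ x
end

section
/- Let U be a set and θ : U → ℝ a nowhere-vanishing function, and suppose A₋₁, A₀, A₁, A₂ : U → ℝ are differentiable-along-a-direction functions which satisfy A₁ + A₂ + A₀ + A₋₁ = 0 on U and whose derivatives in a fixed direction satisfy DA_ℓ = ℓ·A_ℓ·θ for ℓ ∈ {−1, 0, 1, 2}. Then A₂ = 0 on U. -/
/-- Let `U` be a set, `θ : U → ℝ` a nowhere-vanishing function, and `D` a linear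
operator on functions (a directional derivative along a fixed direction). If the functions
`A₋₁, A₀, A₁, A₂` satisfy `A₁ + A₂ + A₀ + A₋₁ = 0` and `D Aℓ = ℓ · Aℓ · θ` for
`ℓ ∈ {-1, 0, 1, 2}`, then `A₂ = 0` on `U`. -/
theorem homogeneous_degree_two_part_vanishes
    {U : Type*} (θ : U → ℝ) (hθ : ∀ x, θ x ≠ 0)
    (D : (U → ℝ) →ₗ[ℝ] (U → ℝ))
    (Am1 A0 A1 A2 : U → ℝ)
    (hsum : A1 + A2 + A0 + Am1 = 0)
    (hm1 : D Am1 = fun x => (-1 : ℝ) * Am1 x * θ x)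
    (h0 : D A0 = fun x => (0 : ℝ) * A0 x * θ x)
    (h1 : D A1 = fun x => (1 : ℝ) * A1 x * θ x)
    (h2 : D A2 = fun x => (2 : ℝ) * A2 x * θ x) :
    ∀ x, A2 x = 0 := by
  -- First differentiation
  have hD1 : D (A1 + A2 + A0 + Am1) = 0 := by rw [hsum, map_zero]
  have e1 : ∀ x, A1 x + 2 * A2 x - Am1 x = 0 := by
    intro x
    have := congrFun hD1 x
    simp only [map_add, Pi.add_apply, hm1, h0, h1, h2, Pi.zero_apply] at this
    have h' : (A1 x + 2 * A2 x - Am1 x) * θ x = 0 := by ring_nf; ring_nf at this; linarith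
    rcases mul_eq_zero.mp h' with h | h
    · exact h
    · exact absurd h (hθ x)
  have e1f : A1 + (2 : ℝ) • A2 - Am1 = 0 := by
    funext x; simpa using e1 x
  have hD2 : D (A1 + (2 : ℝ) • A2 - Am1) = 0 := by rw [e1f, map_zero]
  have e2 : ∀ x, A1 x + 4 * A2 x + Am1 x = 0 := by
    intro x
    have := congrFun hD2 x
    simp only [map_add, map_sub, map_smul, Pi.add_apply, Pi.sub_apply, Pi.smul_apply,
      hm1, h1, h2, Pi.zero_apply, smul_eq_mul] at this
    have h' : (A1 x + 4 * A2 x + Am1 x) * θ x = 0 := by ring_nf; ring_nf at this; linarith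
    rcases mul_eq_zero.mp h' with h | h
    · exact h
    · exact absurd h (hθ x)
  have e2f : A1 + (4 : ℝ) • A2 + Am1 = 0 := by
    funext x; simpa using e2 x
  have hD3 : D (A1 + (4 : ℝ) • A2 + Am1) = 0 := by rw [e2f, map_zero]
  have e3 : ∀ x, A1 x + 8 * A2 x - Am1 x = 0 := by
    intro x
    have := congrFun hD3 x
    simp only [map_add, map_smul, Pi.add_apply, Pi.smul_apply,
      hm1, h1, h2, Pi.zero_apply, smul_eq_mul] at this
    have h' : (A1 x + 8 * A2 x - Am1 x) * θ x = 0 := by ring_nf; ring_nf at this; linarith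
    rcases mul_eq_zero.mp h' with h | h
    · exact h
    · exact absurd h (hθ x)
  intro x
  have := e1 x
  have := e3 x
  linarith
end

section
/- With the same hypotheses (d₂(f₂^{(k)}) = f₂^{(k)} d₂f₁ for all k ≥ 1), if P and Q are homogeneous polynomials of degrees p and q respectively in s variables, and Q(f₂^{(k₁)},…,f₂^{(k_s)}) is nowhere zero, then d₂(P/Q)(f₂^{(k₁)},…,f₂^{(k_s)}) = (p−q)·(P/Q)(f₂^{(k₁)},…,f₂^{(k_s)})·d₂f₁. -/
open scoped ContDiff

noncomputable section

variable {E₂ : Type*} [NormedAddCommGroup E₂] [NormedSpace ℝ E₂]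

/-- Derivative along the 1-dimensional first factor (with arc length coordinate `t`) of the
product `M = M₁ × M₂ = ℝ × M₂`. -/
def derT (g : ℝ × E₂ → ℝ) : ℝ × E₂ → ℝ := fun x => fderiv ℝ g x (1, 0)

/-!
Each `f₂^{(k)}` has `d₂`-derivative `f₂^{(k)} · d₂f₁`. By the chain rule, `d₂` of
`P(f₂^{(k₁)}, …, f₂^{(k_s)})` is `∑ᵢ (∂ᵢP)(…) · f₂^{(kᵢ)} · d₂f₁`, which Euler's identity
`∑ᵢ Xᵢ ∂ᵢP = p P` turns into `p · P(…) · d₂f₁`; the quotient rule then gives the factor `p − q`.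
-/

theorem ContDiff.iterate_derT {g : ℝ × E₂ → ℝ} (hg : ContDiff ℝ ∞ g) (n : ℕ) :
    ContDiff ℝ ∞ (derT^[n] g) := by
  induction n with
  | zero => exact hg
  | succ n ih =>
    rw [Function.iterate_succ_apply']
    exact (ih.fderiv_right le_rfl).clm_apply contDiff_const

section

open MvPolynomial

variable {𝕜 F σ : Type*} [NontriviallyNormedField 𝕜] [NormedAddCommGroup F] [NormedSpace 𝕜 F]
  [Fintype σ] {x : F}

theorem HasFDerivAt.mvPolynomial_eval {g : σ → F → 𝕜} {g' : σ → F →L[𝕜] 𝕜}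
    (hg : ∀ i, HasFDerivAt (g i) (g' i) x) (P : MvPolynomial σ 𝕜) :
    HasFDerivAt (fun y => eval (fun i => g i y) P)
      (∑ i, eval (fun i => g i x) (pderiv i P) • g' i) x := by
  classical
  induction P using MvPolynomial.induction_on with
  | C a =>
    refine ((hasFDerivAt_const a x).congr_of_eventuallyEq
      (.of_forall fun y => eval_C _)).congr_fderiv ?_
    ext; simp
  | add P Q hP hQ =>
    refine ((hP.fun_add hQ).congr_of_eventuallyEq
      (.of_forall fun y => map_add _ _ _)).congr_fderiv ?_
    ext; simp [add_mul, Finset.sum_add_distrib]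
  | mul_X P i hP =>
    refine ((hP.fun_mul (hg i)).congr_of_eventuallyEq (.of_forall fun y => ?_)).congr_fderiv ?_
    · simp
    · ext
      simp [add_mul, mul_assoc, Finset.sum_add_distrib, Finset.mul_sum, Pi.single_apply,
        apply_ite, ite_mul]

theorem MvPolynomial.IsHomogeneous.sum_eval_pderiv_smul_apply {P : MvPolynomial σ 𝕜} {n : ℕ}
    (hP : P.IsHomogeneous n) {a : σ → 𝕜} {ℓ : σ → F →L[𝕜] 𝕜} {v : F} {c : 𝕜}
    (hv : ∀ i, ℓ i v = a i * c) :
    (∑ i, eval a (pderiv i P) • ℓ i) v = n * eval a P * c := by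
  have euler := congrArg (eval a) hP.sum_X_mul_pderiv
  simp only [map_sum, map_mul, eval_X, nsmul_eq_mul, map_natCast] at euler
  simp only [FunLike.coe_sum, Finset.sum_apply, FunLike.coe_smul, Pi.smul_apply, hv, smul_eq_mul]
  rw [← euler, Finset.sum_mul]
  exact Finset.sum_congr rfl fun i _ => by ring

theorem HasFDerivAt.fderiv_div_apply {A B : F → 𝕜} {A' B' : F →L[𝕜] 𝕜}
    (hA : HasFDerivAt A A' x) (hB : HasFDerivAt B B' x) (hB₀ : B x ≠ 0) {v : F} {a b c : 𝕜}
    (hAv : A' v = a * A x * c) (hBv : B' v = b * B x * c) :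
    fderiv 𝕜 (fun y => A y / B y) x v = (a - b) * (A x / B x) * c := by
  have hinv : HasFDerivAt (fun y => (B y)⁻¹) _ x := (hasFDerivAt_inv hB₀).comp x hB
  simp only [div_eq_mul_inv]
  rw [(hA.fun_mul hinv).fderiv]
  simp only [add_apply, smul_apply, ContinuousLinearMap.comp_apply,
    ContinuousLinearMap.toSpanSingleton_apply, smul_eq_mul, hAv, hBv]
  field_simp
  ring

end

theorem homogeneous_rational_partial_differential_general
    (f₁ f₂ : ℝ × E₂ → ℝ) (hf₂ : ContDiff ℝ ∞ f₂)
    (hrel : ∀ k : ℕ, 1 ≤ k → ∀ (x : ℝ × E₂) (v₂ : E₂),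
      fderiv ℝ (derT^[k] f₂) x (0, v₂) = derT^[k] f₂ x * fderiv ℝ f₁ x (0, v₂))
    {s : ℕ} (P Q : MvPolynomial (Fin s) ℝ) {p q : ℕ}
    (hP : P.IsHomogeneous p) (hQ : Q.IsHomogeneous q)
    (k : Fin s → ℕ) (hk : ∀ j, 1 ≤ k j)
    (hQne : ∀ x : ℝ × E₂, MvPolynomial.eval (fun j => derT^[k j] f₂ x) Q ≠ 0) :
    ∀ (x : ℝ × E₂) (v₂ : E₂),
      fderiv ℝ (fun y => MvPolynomial.eval (fun j => derT^[k j] f₂ y) P /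
          MvPolynomial.eval (fun j => derT^[k j] f₂ y) Q) x (0, v₂) =
        ((p : ℝ) - (q : ℝ)) *
          (MvPolynomial.eval (fun j => derT^[k j] f₂ x) P /
            MvPolynomial.eval (fun j => derT^[k j] f₂ x) Q) * fderiv ℝ f₁ x (0, v₂) := by
  intro x v₂
  have hderiv : ∀ j, HasFDerivAt (derT^[k j] f₂) (fderiv ℝ (derT^[k j] f₂) x) x := fun j =>
    ((hf₂.iterate_derT (k j)).differentiable (by simp) x).hasFDerivAt
  have hdir : ∀ j, fderiv ℝ (derT^[k j] f₂) x (0, v₂) =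
      derT^[k j] f₂ x * fderiv ℝ f₁ x (0, v₂) := fun j => hrel (k j) (hk j) x v₂
  exact (HasFDerivAt.mvPolynomial_eval hderiv P).fderiv_div_apply
    (HasFDerivAt.mvPolynomial_eval hderiv Q) (hQne x)
    (hP.sum_eval_pderiv_smul_apply hdir) (hQ.sum_eval_pderiv_smul_apply hdir)

/-- In the setting of the homogeneity lemma (`d₂(f₂^{(k)}) = f₂^{(k)} d₂f₁` for
all `k ≥ 1`), if `P` and `Q` are homogeneous polynomials of degrees `p`, `q` in `s` variables and
`Q(f₂^{(k₁)}, …, f₂^{(k_s)})` is nowhere zero, then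
`d₂ (P/Q)(f₂^{(k₁)}, …, f₂^{(k_s)}) = (p − q) · (P/Q)(f₂^{(k₁)}, …, f₂^{(k_s)}) · d₂f₁`. -/
theorem homogeneous_rational_partial_differential
    (f₁ f₂ : ℝ × E₂ → ℝ) (hf₁ : ContDiff ℝ ∞ f₁) (hf₂ : ContDiff ℝ ∞ f₂)
    (hrel : ∀ k : ℕ, 1 ≤ k → ∀ (x : ℝ × E₂) (v₂ : E₂),
      fderiv ℝ (derT^[k] f₂) x (0, v₂) = derT^[k] f₂ x * fderiv ℝ f₁ x (0, v₂))
    {s : ℕ} (P Q : MvPolynomial (Fin s) ℝ) {p q : ℕ}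
    (hP : P.IsHomogeneous p) (hQ : Q.IsHomogeneous q)
    (k : Fin s → ℕ) (hk : ∀ j, 1 ≤ k j)
    (hQne : ∀ x : ℝ × E₂, MvPolynomial.eval (fun j => derT^[k j] f₂ x) Q ≠ 0) :
    ∀ (x : ℝ × E₂) (v₂ : E₂),
      fderiv ℝ (fun y => MvPolynomial.eval (fun j => derT^[k j] f₂ y) P /
          MvPolynomial.eval (fun j => derT^[k j] f₂ y) Q) x (0, v₂) =
        ((p : ℝ) - (q : ℝ)) *
          (MvPolynomial.eval (fun j => derT^[k j] f₂ x) P /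
            MvPolynomial.eval (fun j => derT^[k j] f₂ x) Q) * fderiv ℝ f₁ x (0, v₂) :=
  homogeneous_rational_partial_differential_general f₁ f₂ hf₂ hrel P Q hP hQ k hk hQne

end
end
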